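/- Let G be a finite simple connected graph with vertex set V, let V_c be a nonempty proper subset of V, and let g : V_c → [0,1] be an incomplete V_c-greyscale of G such that both values 0 and 1 are attained by g. Then there exists a greyscale f of G compatible with g whose gradation vector is lexicographically minimal among the gradation vectors of all greyscales of G compatible with g, and this greyscale f is unique. -/

import Mathlib

open SimpleGraph

/-- A greyscale of a graph on vertex set `V`: a map to `[0,1]` attaining both `0` and `1`. -/
def IsGreyscale {V : Type*} (f : V → ℝ) : Prop :=
  (∀ w, 0 ≤ f w ∧ f w ≤ 1) ∧ (∃ a, f a = 0) ∧ (∃ b, f b = 1)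

/-- The grey tone of an edge: the absolute difference of the tones of its endpoints. -/
noncomputable def greyTone {V : Type*} (f : V → ℝ) : Sym2 V → ℝ :=
  Sym2.lift ⟨fun a b => |f a - f b|, fun _ _ => abs_sub_comm _ _⟩

/-- The edge-colour-increase mapping `F(u,v) = |f u - f v| / d(u,v)` (and `0` on the diagonal). -/
noncomputable def ecim {V : Type*} (G : SimpleGraph V) (f : V → ℝ) (u v : V) : ℝ :=
  letI := Classical.dec (u = v)
  if u = v then 0 else |f u - f v| / (G.dist u v : ℝ)

/-- The support greyscale for antipodal vertices `u, v` of a graph of diameter `D`. -/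
noncomputable def supportGreyscale {V : Type*} (G : SimpleGraph V) (u v : V) (D : ℕ)
    (w : V) : ℝ :=
  ((G.dist w u : ℝ) - (G.dist w v : ℝ) + (D : ℝ)) / (2 * (D : ℝ))

/-- The gradation vector: the grey tones of all edges, sorted in decreasing order. -/
noncomputable def gradVec {V : Type*} [Fintype V] (G : SimpleGraph V) (f : V → ℝ) : List ℝ :=
  letI := Classical.decEq V
  letI : DecidableRel G.Adj := Classical.decRel _
  (G.edgeFinset.val.map (greyTone f)).sort (· ≥ ·)

/-- Lexicographic comparison of gradation vectors: `f` is smaller than or equal to `g`. -/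
def GradLE {V : Type*} [Fintype V] (G : SimpleGraph V) (f g : V → ℝ) : Prop :=
  gradVec G f = gradVec G g ∨ List.Lex (· < ·) (gradVec G f) (gradVec G g)

/-- A minimum gradation greyscale: a greyscale whose gradation vector is lexicographically
minimal among the gradation vectors of all greyscales. -/
def IsMinGradGreyscale {V : Type*} [Fintype V] (G : SimpleGraph V) (f : V → ℝ) : Prop :=
  IsGreyscale f ∧ ∀ g : V → ℝ, IsGreyscale g → GradLE G f g

/-!
Existence: the compatible greyscales form a compact set (a closed subset of `[0,1]^V`), and the
`k`-th entry of the gradation vector is a `2`-Lipschitz function of the greyscale, since the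
`k`-th largest of finitely many numbers moves by at most the sup-norm of a perturbation. So one
can minimize the entries one after another.

Uniqueness: if `f` and `f'` are both minimal, the midpoint `p = (f + f') / 2` is compatible and
every tone of `p` is at most the average of the corresponding tones of `f` and `f'`. The sum of
the `k` largest tones being subadditive, every prefix sum of the gradation vector of `p` is at
most that of `f`, so `p`, `f`, `f'` share one gradation vector. Then the sums of squared tones
agree, and by the parallelogram law `∑ₑ (tone of f - f')² = 2∑ τ_f² + 2∑ τ_{f'}² - 4∑ τ_p² = 0`.
Hence `f - f'` is constant along edges, so constant on the connected graph, and it vanishes on `V_c`.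
-/

namespace List

variable {α : Type*} [LinearOrder α]

theorem le_of_forall_getD_le {a b : List α} (d : α) (hlen : a.length = b.length)
    (H : ∀ k < a.length, (∀ j < k, a.getD j d = b.getD j d) → a.getD k d ≤ b.getD k d) :
    a ≤ b := by
  induction a generalizing b with
  | nil => cases b <;> simp_all
  | cons x a ih =>
    obtain _ | ⟨y, b⟩ := b
    · simp at hlen
    have hxy : x ≤ y := by simpa using H 0 (by simp) (by simp)
    obtain hxy | rfl := hxy.lt_or_eq
    · exact (show x :: a < y :: b from Lex.rel hxy).le
    refine cons_le_cons x (ih (by simpa using hlen) fun k hk hagree => ?_)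
    have := H (k + 1) (by simpa using hk) fun j hj => ?_
    · simpa using this
    cases j with
    | zero => rfl
    | succ j => simpa using hagree j (by omega)

theorem le_of_forall_sum_take_le [AddCommMonoid α] [IsOrderedCancelAddMonoid α] {a b : List α}
    (hlen : a.length = b.length) (H : ∀ k, (a.take k).sum ≤ (b.take k).sum) : a ≤ b := by
  induction a generalizing b with
  | nil => cases b <;> simp_all
  | cons x a ih =>
    obtain _ | ⟨y, b⟩ := b
    · simp at hlen
    have hxy : x ≤ y := by simpa using H 1
    obtain hxy | rfl := hxy.lt_or_eq
    · exact (show x :: a < y :: b from Lex.rel hxy).le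
    refine cons_le_cons x (ih (by simpa using hlen) fun k => ?_)
    have := H (k + 1)
    rw [take_succ_cons, take_succ_cons, sum_cons, sum_cons] at this
    exact le_of_add_le_add_left this

theorem Sublist.getElem_le_of_pairwise_ge {u l : List α} (h : u <+ l) (hl : l.Pairwise (· ≥ ·))
    (i : ℕ) (hi : i < u.length) : u[i] ≤ l[i]'(hi.trans_le h.length_le) := by
  induction h generalizing i with
  | slnil => simp at hi
  | cons b h ih =>
    refine (ih hl.of_cons i hi).trans ?_
    cases i with
    | zero => exact rel_of_pairwise_cons hl (getElem_mem _)
    | succ i => exact pairwise_iff_getElem.1 hl.of_cons i (i + 1) _ _ (by omega)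
  | cons_cons a h ih =>
    cases i with
    | zero => exact le_rfl
    | succ i => exact ih hl.of_cons i (by simpa using hi)

theorem Subperm.forall₂_le_take_of_pairwise_ge {u l : List α} (h : u <+~ l)
    (hu : u.Pairwise (· ≥ ·)) (hl : l.Pairwise (· ≥ ·)) :
    Forall₂ (· ≤ ·) u (l.take u.length) := by
  have hsub := sublist_of_subperm_of_pairwise h hu hl
  rw [forall₂_iff_get]
  refine ⟨by simp [hsub.length_le], fun i hi _ => ?_⟩
  simpa using hsub.getElem_le_of_pairwise_ge hl i hi

end List

namespace Multiset

section LinearOrder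

variable {α ι : Type*} [LinearOrder α]

theorem forall₂_le_take_sort_of_le {t s : Multiset α} (h : t ≤ s) :
    List.Forall₂ (· ≤ ·) (t.sort (· ≥ ·)) ((s.sort (· ≥ ·)).take (card t)) := by
  rw [← length_sort (r := (· ≥ ·))]
  refine List.Subperm.forall₂_le_take_of_pairwise_ge ?_ (pairwise_sort _ _) (pairwise_sort _ _)
  rwa [← coe_le, sort_eq, sort_eq]

theorem le_getD_sort_of_le {t s : Multiset α} (h : t ≤ s) {k : ℕ} (hk : card t = k + 1)
    {a : α} (ha : ∀ v ∈ t, a ≤ v) (d : α) : a ≤ (s.sort (· ≥ ·)).getD k d := by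
  have hk' : k < (t.sort (· ≥ ·)).length := by simp [hk]
  have hle := List.forall₂_iff_get.1 (forall₂_le_take_sort_of_le h)
  have hks : k < (s.sort (· ≥ ·)).length := by
    have := card_le_card h
    rw [length_sort]
    omega
  calc a ≤ (t.sort (· ≥ ·))[k] := ha _ ((mem_sort _).1 (List.getElem_mem hk'))
    _ ≤ (s.sort (· ≥ ·))[k] := by simpa using hle.2 k hk' (by simpa [hle.1] using hk')
    _ = _ := (List.getD_eq_getElem _ _ hks).symm

theorem sum_le_sum_take_sort [AddCommMonoid α] [IsOrderedAddMonoid α] {t s : Multiset α}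
    (h : t ≤ s) : t.sum ≤ ((s.sort (· ≥ ·)).take (card t)).sum := by
  simpa [← sum_coe, sort_eq] using (forall₂_le_take_sort_of_le h).sum_le_sum

theorem exists_coe_eq_pairwise_map (M : Multiset ι) (x : ι → α) :
    ∃ l : List ι, (l : Multiset ι) = M ∧ (l.map x).Pairwise (· ≥ ·) := by
  classical
  let r : ι → ι → Prop := fun i j => x j ≤ x i
  have : Std.Total r := ⟨fun i j => le_total (x j) (x i)⟩
  have : IsTrans ι r := ⟨fun _ _ _ hij hjk => hjk.trans hij⟩
  refine ⟨M.toList.insertionSort r, ?_, ?_⟩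
  · rw [coe_eq_coe.2 (List.perm_insertionSort r _), coe_toList]
  · exact List.pairwise_map.2 (List.pairwise_insertionSort r _)

theorem sort_map_eq_map {M : Multiset ι} {x : ι → α} {l : List ι} (hl : (l : Multiset ι) = M)
    (hs : (l.map x).Pairwise (· ≥ ·)) : (M.map x).sort (· ≥ ·) = l.map x :=
  List.Perm.eq_of_pairwise' (pairwise_sort _ _) hs (by rw [← coe_eq_coe, sort_eq, ← hl, map_coe])

end LinearOrder

variable {ι : Type*} {M : Multiset ι}

theorem getD_sort_map_le_add {x y : ι → ℝ} {c : ℝ} (hc : 0 ≤ c) (h : ∀ i ∈ M, x i ≤ y i + c)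
    (k : ℕ) : ((M.map x).sort (· ≥ ·)).getD k 0 ≤ ((M.map y).sort (· ≥ ·)).getD k 0 + c := by
  obtain hk | hk := le_or_gt (card M) k
  · rw [List.getD_eq_default _ _ (by simpa using hk), List.getD_eq_default _ _ (by simpa using hk)]
    linarith
  obtain ⟨l, rfl, hl⟩ := exists_coe_eq_pairwise_map M x
  have hkl : k < l.length := by simpa using hk
  rw [sort_map_eq_map rfl hl, List.getD_eq_getElem _ _ (by simpa using hkl), List.getElem_map]
  -- the `k + 1` largest `x`-values come first in `l`; there `y ≥ x - c ≥ x l[k] - c`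
  suffices x l[k] - c ≤ ((map y l).sort (· ≥ ·)).getD k 0 by linarith
  refine le_getD_sort_of_le (t := ((l.take (k + 1) : List ι) : Multiset ι).map y)
    (map_le_map (coe_le.2 (List.take_sublist _ _).subperm)) (by simp; omega) ?_ 0
  simp only [mem_map, mem_coe, forall_exists_index, and_imp, forall_apply_eq_imp_iff₂]
  intro i hi
  obtain ⟨j, hj, rfl⟩ := List.mem_take_iff_getElem.1 hi
  have : x l[k] ≤ x l[j] := by
    have := (List.sortedGE_iff_pairwise.2 hl).getElem_ge_getElem_of_le
      (i := k) (j := j) (hi := by simpa using hkl) (hj := by simp; omega) (by omega)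
    rwa [List.getElem_map, List.getElem_map] at this
  linarith [h _ (mem_coe.2 (List.mem_of_mem_take hi))]

theorem two_mul_sum_take_sort_map_le {x y z : ι → ℝ} (h : ∀ i ∈ M, 2 * x i ≤ y i + z i) (k : ℕ) :
    2 * (((M.map x).sort (· ≥ ·)).take k).sum ≤
      (((M.map y).sort (· ≥ ·)).take k).sum + (((M.map z).sort (· ≥ ·)).take k).sum := by
  obtain ⟨l, rfl, hl⟩ := exists_coe_eq_pairwise_map M x
  set u : Multiset ι := ((l.take k : List ι) : Multiset ι)
  have hu : u ≤ l := coe_le.2 (List.take_sublist _ _).subperm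
  have htake : ∀ w : ι → ℝ, (((map w l).sort (· ≥ ·)).take k).sum =
      (((map w l).sort (· ≥ ·)).take (card (u.map w))).sum := by
    intro w
    rw [List.take_eq_take_min, length_sort]
    simp [u]
  have hx : (((map x l).sort (· ≥ ·)).take k).sum = (u.map x).sum := by
    rw [sort_map_eq_map rfl hl, ← List.map_take]; rfl
  have hsum : (u.map (fun i => 2 * x i)).sum ≤ (u.map (fun i => y i + z i)).sum :=
    sum_map_le_sum_map _ _ fun i hi => h i (mem_of_le hu hi)
  rw [sum_map_mul_left, sum_map_add] at hsum
  rw [hx, htake y, htake z]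
  linarith [sum_le_sum_take_sort (map_le_map (f := y) hu),
    sum_le_sum_take_sort (map_le_map (f := z) hu)]

end Multiset

theorem IsCompact.exists_forall_lex_le {X β : Type*} [TopologicalSpace X] [LinearOrder β]
    [TopologicalSpace β] [OrderClosedTopology β] {S : Set X} (hS : IsCompact S)
    (hne : S.Nonempty) (Φ : ℕ → X → β) (hΦ : ∀ k, Continuous (Φ k)) (m : ℕ) :
    ∃ x ∈ S, ∀ y ∈ S, ∀ k < m, (∀ j < k, Φ j x = Φ j y) → Φ k x ≤ Φ k y := by
  induction m generalizing S Φ with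
  | zero =>
    obtain ⟨x, hx⟩ := hne
    exact ⟨x, hx, by simp⟩
  | succ m ih =>
    obtain ⟨x₀, hx₀, hmin⟩ := hS.exists_isMinOn hne (hΦ 0).continuousOn
    obtain ⟨x, ⟨hxS, hx0⟩, hx⟩ := ih (hS.inter_right (isClosed_eq (hΦ 0) continuous_const))
      ⟨x₀, hx₀, rfl⟩ (fun k => Φ (k + 1)) (fun k => hΦ _)
    refine ⟨x, hxS, fun y hy k hk hagree => ?_⟩
    cases k with
    | zero => exact (le_of_eq hx0).trans (hmin hy)
    | succ k =>
      exact hx y ⟨hy, (hagree 0 (by omega)).symm.trans hx0⟩ k (by omega)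
        fun j hj => hagree (j + 1) (by omega)

theorem SimpleGraph.Preconnected.apply_eq_of_forall_adj {V β : Type*} {G : SimpleGraph V}
    (hG : G.Preconnected) {φ : V → β} (h : ∀ u v, G.Adj u v → φ u = φ v) (u v : V) :
    φ u = φ v := by
  obtain ⟨w⟩ := hG u v
  induction w with
  | nil => rfl
  | cons hadj _ ih => exact (h _ _ hadj).trans ih

section Greyscale

variable {V : Type*}

theorem greyTone_mk (f : V → ℝ) (a b : V) : greyTone f s(a, b) = |f a - f b| := rfl

theorem greyTone_le_add_dist [Fintype V] (f h : V → ℝ) (e : Sym2 V) :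
    greyTone f e ≤ greyTone h e + 2 * dist f h := by
  induction e using Sym2.ind with
  | _ u v =>
    have hu := dist_le_pi_dist f h u
    have hv := dist_le_pi_dist f h v
    rw [Real.dist_eq] at hu hv
    calc |f u - f v| = |(h u - h v) + ((f u - h u) - (f v - h v))| := by ring_nf
      _ ≤ |h u - h v| + (|f u - h u| + |f v - h v|) :=
        (abs_add_le _ _).trans (add_le_add_right (abs_sub _ _) _)
      _ ≤ |h u - h v| + 2 * dist f h := by linarith

theorem two_mul_greyTone_midpoint_le (f f' : V → ℝ) (e : Sym2 V) :
    2 * greyTone (fun v => (f v + f' v) / 2) e ≤ greyTone f e + greyTone f' e := by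
  induction e using Sym2.ind with
  | _ u v =>
    calc 2 * |(f u + f' u) / 2 - (f v + f' v) / 2| = |(f u - f v) + (f' u - f' v)| := by
          rw [← abs_two, ← abs_mul, abs_two]; ring_nf
      _ ≤ |f u - f v| + |f' u - f' v| := abs_add_le _ _

theorem greyTone_sub_sq (f f' : V → ℝ) (e : Sym2 V) :
    greyTone (f - f') e ^ 2 = 2 * greyTone f e ^ 2 + 2 * greyTone f' e ^ 2 -
      4 * greyTone (fun v => (f v + f' v) / 2) e ^ 2 := by
  induction e using Sym2.ind with
  | _ u v =>
    simp only [greyTone_mk, sq_abs, Pi.sub_apply]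
    ring

theorem GradLE.antisymm [Fintype V] {G : SimpleGraph V} {f h : V → ℝ} (hfh : GradLE G f h)
    (hhf : GradLE G h f) : gradVec G f = gradVec G h :=
  le_antisymm hfh hhf

variable [Fintype V] (G : SimpleGraph V)

theorem gradVec_eq_sort [DecidableEq V] [DecidableRel G.Adj] (f : V → ℝ) :
    gradVec G f = (G.edgeFinset.val.map (greyTone f)).sort (· ≥ ·) := by
  unfold gradVec
  congr 3
  convert rfl

theorem length_gradVec_eq (f h : V → ℝ) : (gradVec G f).length = (gradVec G h).length := by
  classical
  rw [gradVec_eq_sort, gradVec_eq_sort, Multiset.length_sort, Multiset.length_sort,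
    Multiset.card_map, Multiset.card_map]

theorem sum_edgeFinset_greyTone_eq [DecidableEq V] [DecidableRel G.Adj] (φ : ℝ → ℝ)
    {f f' : V → ℝ} (h : gradVec G f = gradVec G f') :
    ∑ e ∈ G.edgeFinset, φ (greyTone f e) = ∑ e ∈ G.edgeFinset, φ (greyTone f' e) := by
  have := congrArg (fun l : List ℝ => ((l : Multiset ℝ).map φ).sum) h
  rw [gradVec_eq_sort, gradVec_eq_sort, Multiset.sort_eq, Multiset.sort_eq] at this
  rw [Multiset.map_map, Multiset.map_map] at this
  exact this

theorem continuous_getD_gradVec (k : ℕ) :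
    Continuous fun f : V → ℝ => (gradVec G f).getD k 0 := by
  classical
  refine (LipschitzWith.of_le_add_mul 2 fun f h => ?_).continuous
  simp only [gradVec_eq_sort]
  exact Multiset.getD_sort_map_le_add (by positivity) (fun e _ => greyTone_le_add_dist f h e) k

theorem gradLE_midpoint {f f' : V → ℝ} (h : gradVec G f = gradVec G f') :
    GradLE G (fun v => (f v + f' v) / 2) f := by
  classical
  refine List.le_of_forall_sum_take_le (length_gradVec_eq G _ _) fun k => ?_
  have := Multiset.two_mul_sum_take_sort_map_le (M := G.edgeFinset.val)
    (fun e _ => two_mul_greyTone_midpoint_le f f' e) k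
  rw [gradVec_eq_sort, gradVec_eq_sort] at h ⊢
  rw [← h] at this
  linarith

theorem greyTone_sub_eq_zero_of_gradVec_eq {f f' : V → ℝ} (h : gradVec G f = gradVec G f')
    (hp : gradVec G (fun v => (f v + f' v) / 2) = gradVec G f) {e : Sym2 V}
    (he : e ∈ G.edgeSet) : greyTone (f - f') e = 0 := by
  classical
  have hsum : ∑ e ∈ G.edgeFinset, greyTone (f - f') e ^ 2 = 0 := by
    simp only [greyTone_sub_sq]
    rw [Finset.sum_sub_distrib, Finset.sum_add_distrib, ← Finset.mul_sum, ← Finset.mul_sum,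
      ← Finset.mul_sum, sum_edgeFinset_greyTone_eq G (· ^ 2) hp,
      sum_edgeFinset_greyTone_eq G (· ^ 2) h]
    ring
  have := (Finset.sum_eq_zero_iff_of_nonneg fun e _ => sq_nonneg (greyTone (f - f') e)).1 hsum e
    (mem_edgeFinset.2 he)
  exact pow_eq_zero_iff two_ne_zero |>.1 this

theorem exists_gradLE_minimal {S : Set (V → ℝ)} (hS : IsCompact S) (hne : S.Nonempty) :
    ∃ f ∈ S, ∀ h ∈ S, GradLE G f h := by
  obtain ⟨f, hf, hmin⟩ := hS.exists_forall_lex_le hne (fun k f => (gradVec G f).getD k 0)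
    (continuous_getD_gradVec G) (gradVec G 0).length
  refine ⟨f, hf, fun h hh => List.le_of_forall_getD_le 0 (length_gradVec_eq G f h) ?_⟩
  exact fun k hk => hmin h hh k (by rwa [length_gradVec_eq G f 0] at hk)

theorem eq_of_gradLE_minimal (hG : G.Connected) {S : Set (V → ℝ)} (hS : Convex ℝ S)
    {f f' : V → ℝ} (hf : f ∈ S) (hf' : f' ∈ S) (hmin : ∀ h ∈ S, GradLE G f h)
    (hmin' : ∀ h ∈ S, GradLE G f' h) {v₀ : V} (hv₀ : f v₀ = f' v₀) : f = f' := by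
  have hgv := (hmin f' hf').antisymm (hmin' f hf)
  have hp : (fun v => (f v + f' v) / 2) ∈ S := by
    convert hS hf hf' (by norm_num : (0 : ℝ) ≤ 1 / 2) (by norm_num : (0 : ℝ) ≤ 1 / 2)
      (by norm_num) using 1
    ext v
    simp only [Pi.add_apply, Pi.smul_apply, smul_eq_mul]
    ring
  have hgp := (gradLE_midpoint G hgv).antisymm (hmin _ hp)
  have hconst : ∀ u v, G.Adj u v → (f - f') u = (f - f') v := fun u v huv => by
    have := greyTone_sub_eq_zero_of_gradVec_eq G hgv hgp (G.mem_edgeSet.2 huv)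
    rwa [greyTone_mk, abs_eq_zero, sub_eq_zero] at this
  funext v
  have := hG.preconnected.apply_eq_of_forall_adj hconst v v₀
  rwa [Pi.sub_apply, Pi.sub_apply, hv₀, sub_self, sub_eq_zero] at this

end Greyscale

section Compatible

variable {V : Type*} {Vc : Set V}

def compatibleMaps (g : Vc → ℝ) : Set (V → ℝ) :=
  {f | (∀ w, f w ∈ Set.Icc 0 1) ∧ ∀ u : Vc, f u = g u}

theorem isCompact_compatibleMaps (g : Vc → ℝ) : IsCompact (compatibleMaps g) := by
  have hclosed : IsClosed {f : V → ℝ | ∀ u : Vc, f u = g u} := by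
    simp only [Set.ofPred_forall]
    exact isClosed_iInter fun u => isClosed_eq (continuous_apply _) continuous_const
  have : compatibleMaps g =
      Set.univ.pi (fun _ => Set.Icc 0 1) ∩ {f : V → ℝ | ∀ u : Vc, f u = g u} := by
    ext f
    simp [compatibleMaps, Pi.le_def, forall_and]
  rw [this]
  exact (isCompact_univ_pi fun _ => isCompact_Icc).inter_right hclosed

theorem convex_compatibleMaps (g : Vc → ℝ) : Convex ℝ (compatibleMaps g) := by
  rintro f ⟨hf, hfg⟩ h ⟨hh, hhg⟩ a b ha hb hab
  refine ⟨fun w => convex_Icc 0 1 (hf w) (hh w) ha hb hab, fun u => ?_⟩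
  simp [hfg u, hhg u, ← add_mul, hab]

theorem compatibleMaps_nonempty {g : Vc → ℝ} (hg : ∀ u : Vc, 0 ≤ g u ∧ g u ≤ 1) :
    (compatibleMaps g).Nonempty := by
  classical
  refine ⟨fun v => if hv : v ∈ Vc then g ⟨v, hv⟩ else 0, fun w => ?_, fun u => by simp⟩
  by_cases hw : w ∈ Vc
  · simpa [hw] using hg ⟨w, hw⟩
  · simp [hw]

theorem mem_compatibleMaps_iff {g : Vc → ℝ} (h0 : ∃ a : Vc, g a = 0) (h1 : ∃ b : Vc, g b = 1)
    {f : V → ℝ} : f ∈ compatibleMaps g ↔ IsGreyscale f ∧ ∀ u : Vc, f u = g u := by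
  obtain ⟨a, ha⟩ := h0
  obtain ⟨b, hb⟩ := h1
  refine ⟨fun ⟨hf, hfg⟩ => ⟨⟨hf, ⟨a, (hfg a).trans ha⟩, ⟨b, (hfg b).trans hb⟩⟩, hfg⟩,
    fun ⟨hf, hfg⟩ => ⟨hf.1, hfg⟩⟩

end Compatible

theorem stmt_16_general {V : Type*} [Fintype V] (G : SimpleGraph V) (hG : G.Connected)
    (Vc : Set V)
    (g : Vc → ℝ) (hg : ∀ u : Vc, 0 ≤ g u ∧ g u ≤ 1)
    (h0 : ∃ a : Vc, g a = 0) (h1 : ∃ b : Vc, g b = 1) :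
    ∃! f : V → ℝ, IsGreyscale f ∧ (∀ u : Vc, f u = g u) ∧
      ∀ h : V → ℝ, IsGreyscale h → (∀ u : Vc, h u = g u) → GradLE G f h := by
  have hmem := fun f => mem_compatibleMaps_iff (f := f) h0 h1
  obtain ⟨f, hf, hmin⟩ := exists_gradLE_minimal G (isCompact_compatibleMaps g)
    (compatibleMaps_nonempty hg)
  obtain ⟨a, -⟩ := h0
  refine ⟨f, ⟨((hmem f).1 hf).1, ((hmem f).1 hf).2,
    fun h hh hhg => hmin h ((hmem h).2 ⟨hh, hhg⟩)⟩, ?_⟩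
  rintro f' ⟨hf', hf'g, hmin'⟩
  refine eq_of_gradLE_minimal G hG (convex_compatibleMaps g) ((hmem f').2 ⟨hf', hf'g⟩) hf
    (fun h hh => hmin' h ((hmem h).1 hh).1 ((hmem h).1 hh).2) hmin (v₀ := a) ?_
  rw [hf'g a, ((hmem f).1 hf).2 a]

theorem stmt_16 {V : Type*} [Fintype V] (G : SimpleGraph V) (hG : G.Connected)
    (Vc : Set V) (hne : Vc.Nonempty) (hproper : Vc ≠ Set.univ)
    (g : Vc → ℝ) (hg : ∀ u : Vc, 0 ≤ g u ∧ g u ≤ 1)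
    (h0 : ∃ a : Vc, g a = 0) (h1 : ∃ b : Vc, g b = 1) :
    ∃! f : V → ℝ, IsGreyscale f ∧ (∀ u : Vc, f u = g u) ∧
      ∀ h : V → ℝ, IsGreyscale h → (∀ u : Vc, h u = g u) → GradLE G f h :=
  stmt_16_general G hG Vc g hg h0 h1
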